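/- Let D be a minimally rich domain that is connected with two distinct neighbours. Then in the induced graph G(D), every vertex has degree at least 2. -/
import Mathlib


open Relation

/-- A preference is a ranking: a bijection from alternatives to ranks (0 = best). -/
abbrev Pref (A : Type*) [Fintype A] := A ≃ Fin (Fintype.card A)

namespace Pref

variable {A : Type*} [Fintype A]

/-- The rank (as a natural number, 0 = best) of alternative `a` in preference `P`. -/
def rk (P : Pref A) (a : A) : ℕ := (P a : ℕ)

/-- The top-ranked alternative of `P`. -/
noncomputable def top [Nonempty A] (P : Pref A) : A := P.symm ⟨0, Fintype.card_pos⟩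

/-- `a` is strictly preferred to `b` under `P`. -/
def SPrefers (P : Pref A) (a b : A) : Prop := rk P a < rk P b

/-- Two preferences are adjacent if they differ by one swap of consecutively
ranked alternatives. -/
def Adjacent (P P' : Pref A) : Prop :=
  ∃ a b : A, rk P a = rk P b + 1 ∧ rk P' a = rk P b ∧ rk P' b = rk P a ∧
    ∀ c : A, c ≠ a → c ≠ b → rk P c = rk P' c

end Pref

open Pref

variable {A : Type*} [Fintype A] [Nonempty A]

/-- One step between members of the domain `D` along adjacent preferences. -/
def StepRel (D : Set (Pref A)) (P Q : Pref A) : Prop := P ∈ D ∧ Q ∈ D ∧ Adjacent P Q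

/-- The domain `D` is connected: any two members are joined by a path of
adjacent preferences inside `D`. -/
def DConnected (D : Set (Pref A)) : Prop :=
  ∀ P ∈ D, ∀ Q ∈ D, ReflTransGen (StepRel D) P Q

/-- One step inside `D` along adjacent preferences keeping the same top. -/
def TStepRel (D : Set (Pref A)) (P Q : Pref A) : Prop :=
  StepRel D P Q ∧ Pref.top P = Pref.top Q

/-- The top-connected closure of `P` in `D`. -/
def TCC (D : Set (Pref A)) (P : Pref A) : Set (Pref A) :=
  {Q | ReflTransGen (TStepRel D) P Q}

/-- Neighbours of a subset `S` inside the domain `D`. -/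
def Nbr (D S : Set (Pref A)) : Set (Pref A) :=
  {Q | Q ∈ D ∧ Q ∉ S ∧ ∃ P ∈ S, Adjacent P Q}

/-- `D` is connected with two distinct neighbours. -/
def CDN (D : Set (Pref A)) : Prop :=
  DConnected D ∧
    ∀ P ∈ D, ∃ Q ∈ Nbr D (TCC D P), ∃ R ∈ Nbr D (TCC D P), Pref.top Q ≠ Pref.top R

/-- Every alternative is top-ranked in some preference of `D`. -/
def MinimallyRich (D : Set (Pref A)) : Prop := ∀ a : A, ∃ P ∈ D, Pref.top P = a

/-- The edge relation of the induced graph `G(D)` on alternatives. -/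
def EdgeD (D : Set (Pref A)) (a b : A) : Prop :=
  ∃ P ∈ D, ∃ P' ∈ D, Adjacent P P' ∧
    Pref.top P = a ∧ Pref.top P' = b ∧ rk P b = 1 ∧ rk P' a = 1

/-- `v 0, v 1, …, v (k-1)` is a path in the induced graph `G(D)`. -/
def IsPathD (D : Set (Pref A)) (k : ℕ) (v : ℕ → A) : Prop :=
  (∀ i j, i < k → j < k → v i = v j → i = j) ∧
    ∀ i, i + 1 < k → EdgeD D (v i) (v (i + 1))

/-- Connected component of `P` in `D`. -/
def Component (D : Set (Pref A)) (P : Pref A) : Set (Pref A) :=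
  {Q | Q ∈ D ∧ ReflTransGen (StepRel D) P Q}

section SCF

variable {n : ℕ} (D : Set (Pref A))

/-- Unanimity. -/
def Unanimous (f : (Fin n → D) → A) : Prop :=
  ∀ (P : Fin n → D) (a : A), (∀ i, Pref.top (P i : Pref A) = a) → f P = a

/-- Local strategy-proofness. -/
def LocallySP (f : (Fin n → D) → A) : Prop :=
  ∀ (P : Fin n → D) (i : Fin n) (Q : D), Adjacent (P i : Pref A) (Q : Pref A) →
    ¬ SPrefers (P i : Pref A) (f (Function.update P i Q)) (f P)

/-- (Global) strategy-proofness. -/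
def StrategyProof (f : (Fin n → D) → A) : Prop :=
  ∀ (P : Fin n → D) (i : Fin n) (Q : D),
    ¬ SPrefers (P i : Pref A) (f (Function.update P i Q)) (f P)

/-- Tops-onlyness. -/
def TopsOnly (f : (Fin n → D) → A) : Prop :=
  ∀ P P' : Fin n → D,
    (∀ i, Pref.top (P i : Pref A) = Pref.top (P' i : Pref A)) → f P = f P'

/-- Dictatorship. -/
def Dictatorial (f : (Fin n → D) → A) : Prop :=
  ∃ i : Fin n, ∀ P : Fin n → D, f P = Pref.top (P i : Pref A)

/-- Voter `i` is decisive over `a`. -/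
def Decisive (f : (Fin n → D) → A) (i : Fin n) (a : A) : Prop :=
  ∀ P : Fin n → D, Pref.top (P i : Pref A) = a → f P = a

end SCF


section Aux
variable {A : Type*} [Fintype A] [Nonempty A]

lemma rk_top (P : Pref A) : rk P (Pref.top P) = 0 := by
  simp [rk, Pref.top]

omit [Nonempty A] in
lemma rk_inj (P : Pref A) {x y : A} (h : rk P x = rk P y) : x = y := by
  have : P x = P y := Fin.ext h
  exact P.injective this

lemma eq_top_of_rk_zero (P : Pref A) {x : A} (h : rk P x = 0) : x = Pref.top P :=
  rk_inj P (h.trans (rk_top P).symm)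

lemma adj_tops (P Q : Pref A) (h : Adjacent P Q) (hne : Pref.top P ≠ Pref.top Q) :
    rk P (Pref.top Q) = 1 ∧ rk Q (Pref.top P) = 1 := by
  obtain ⟨a, b, h1, h2, h3, h4⟩ := h
  by_cases hb : Pref.top P = b
  · have hb0 : rk P b = 0 := hb ▸ rk_top P
    have hQa : rk Q a = 0 := by rw [h2, hb0]
    have hta : a = Pref.top Q := eq_top_of_rk_zero Q hQa
    constructor
    · rw [← hta, h1, hb0]
    · rw [hb, h3, h1, hb0]
  · by_cases ha : Pref.top P = a
    · exfalso
      have : rk P a = 0 := ha ▸ rk_top P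
      omega
    · exfalso
      have := h4 (Pref.top P) ha hb
      have h0 : rk Q (Pref.top P) = 0 := by rw [← this, rk_top]
      exact hne (eq_top_of_rk_zero Q h0)

lemma tcc_mem {D : Set (Pref A)} {P Q : Pref A} (hP : P ∈ D) (h : Q ∈ TCC D P) :
    Q ∈ D ∧ Pref.top Q = Pref.top P := by
  induction h with
  | refl => exact ⟨hP, rfl⟩
  | tail _ hstep ih => exact ⟨hstep.1.2.1, hstep.2 ▸ ih.2⟩

lemma edge_of_nbr {D : Set (Pref A)} {P Q : Pref A} (hP : P ∈ D)
    (hQ : Q ∈ Nbr D (TCC D P)) :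
    Pref.top Q ≠ Pref.top P ∧ EdgeD D (Pref.top P) (Pref.top Q) := by
  obtain ⟨hQD, hQn, P', hP', hadj⟩ := hQ
  obtain ⟨hP'D, htop⟩ := tcc_mem hP hP'
  have hne : Pref.top P' ≠ Pref.top Q := by
    intro heq
    exact hQn (ReflTransGen.tail hP' ⟨⟨hP'D, hQD, hadj⟩, heq⟩)
  obtain ⟨h1, h2⟩ := adj_tops P' Q hadj hne
  refine ⟨fun h => hne (htop ▸ h.symm), ?_⟩
  exact ⟨P', hP'D, Q, hQD, hadj, htop, rfl, h1, htop ▸ h2⟩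

end Aux

/-- Lemma 1(b): in the graph induced by a minimally rich domain that is
connected with two distinct neighbours, every vertex has degree at least 2,
i.e. has two distinct neighbours. -/
theorem stmt4 {A : Type*} [Fintype A] [Nonempty A] (hA : 3 ≤ Fintype.card A)
    (D : Set (Pref A)) (hmr : MinimallyRich D) (hcdn : CDN D) :
    ∀ a : A, ∃ b c : A, b ≠ c ∧ EdgeD D a b ∧ EdgeD D a c := by
  intro a
  obtain ⟨P, hP, htop⟩ := hmr a
  obtain ⟨Q, hQ, R, hR, hQR⟩ := hcdn.2 P hP
  obtain ⟨hQne, hQe⟩ := edge_of_nbr hP hQ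
  obtain ⟨hRne, hRe⟩ := edge_of_nbr hP hR
  exact ⟨Pref.top Q, Pref.top R, hQR, htop ▸ hQe, htop ▸ hRe⟩
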